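/- Suppose ‖H‖₁ > 0 and that there is a leaf set U(u) ⊆ B_R such that {‖v − u‖₁ : v ∈ U(u)} = [0, d_max(u)] for some d_max(u) > 0, and a finite constant C_U(u) such that for every v ∈ U(u) and every k ∈ ℕ, D_k^{(1)}(u,v) := ∑_{i=0}^{k} ‖Ψ_{t_i}(v) − Ψ_{t_i}(u)‖₁ ≤ C_U(u)·‖v − u‖₁. Suppose q(v) > 0 for every v ∈ U(u). Then for every ε with 0 < ε ≤ d_max(u)·C_U(u)·‖H‖₁ and every k ∈ ℕ, the expected ℓ¹-diameter of S_k satisfies E[diam₁(S_k)] ≥ (1/e)·ε/(C_U(u)·‖H‖₁). -/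

import Mathlib

/-! Choose `v ∈ U` at ℓ¹ distance `c = ε / (C_U ‖H‖₁)` from `u`. The leaf-set bound makes the
observed signals of `v` and `u` differ by vectors `w_i` of total ℓ¹ mass at most `ε`. Whenever
each noise `Z_i` lies in the intersection of the cube `[-ε, ε]^{d_o}` with its translate by `w_i`,
both `u` and `v` belong to the smoother support, whose diameter is then at least `c`. Under the
uniform law that intersection has probability `∏_j (1 - |w_ij| / 2ε) ≥ exp (-‖w_i‖₁ / ε)`, since
`1 - a ≥ exp (-2a)` on `[0, 1/2]`; by independence the whole event has probability at least
`exp (-1)`. -/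

open MeasureTheory ProbabilityTheory Set
open scoped ENNReal

noncomputable section

/-- The ℓ¹ norm on `ℝ^n`. -/
def norm1 {n : ℕ} (x : EuclideanSpace ℝ (Fin n)) : ℝ := ∑ j, |x j|

/-- The supremum norm on `ℝ^n`. -/
def normInf {n : ℕ} (x : EuclideanSpace ℝ (Fin n)) : ℝ := ⨆ j, |x j|

/-- The operator norm induced by the ℓ¹ norms. -/
def opNorm1 {n m : ℕ} (T : EuclideanSpace ℝ (Fin n) → EuclideanSpace ℝ (Fin m)) : ℝ :=
  sSup ((fun x => norm1 (T x)) '' {x | norm1 x ≤ 1})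

/-- The ℓ¹ diameter of a set. -/
def diam1 {n : ℕ} (S : Set (EuclideanSpace ℝ (Fin n))) : ℝ :=
  sSup ((fun p : EuclideanSpace ℝ (Fin n) × EuclideanSpace ℝ (Fin n) =>
    norm1 (p.1 - p.2)) '' (S ×ˢ S))

/-- The support of the smoothing distribution after observations `Y_0, …, Y_k`. -/
def smootherSupp {d dO : ℕ} {Ω : Type*}
    (Ψ : ℝ → EuclideanSpace ℝ (Fin d) → EuclideanSpace ℝ (Fin d))
    (H : EuclideanSpace ℝ (Fin d) →L[ℝ] EuclideanSpace ℝ (Fin dO))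
    (q : EuclideanSpace ℝ (Fin d) → ℝ) (R h ε : ℝ)
    (u : EuclideanSpace ℝ (Fin d)) (Z : ℕ → Ω → EuclideanSpace ℝ (Fin dO))
    (k : ℕ) (ω : Ω) : Set (EuclideanSpace ℝ (Fin d)) :=
  {x | ‖x‖ ≤ R ∧ 0 < q x ∧
    ∀ i ≤ k, normInf (H (Ψ (i * h) x) - (H (Ψ (i * h) u) + Z i ω)) ≤ ε}

section L1

variable {n m : ℕ}

lemma norm1_nonneg (x : EuclideanSpace ℝ (Fin n)) : 0 ≤ norm1 x :=
  Finset.sum_nonneg fun _ _ => abs_nonneg _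

lemma abs_apply_le_norm1 (x : EuclideanSpace ℝ (Fin n)) (j : Fin n) : |x j| ≤ norm1 x :=
  Finset.single_le_sum (f := fun j => |x j|) (fun _ _ => abs_nonneg _) (Finset.mem_univ j)

lemma norm1_le_card_mul_norm (x : EuclideanSpace ℝ (Fin n)) : norm1 x ≤ n * ‖x‖ := by
  calc norm1 x ≤ ∑ _j : Fin n, ‖x‖ :=
        Finset.sum_le_sum fun j _ => by simpa using PiLp.norm_apply_le x j
  _ = n * ‖x‖ := by simp

lemma norm_le_norm1 (x : EuclideanSpace ℝ (Fin n)) : ‖x‖ ≤ norm1 x := by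
  rw [EuclideanSpace.norm_eq, norm1, Real.sqrt_le_left (Finset.sum_nonneg fun _ _ => abs_nonneg _)]
  simpa only [Real.norm_eq_abs, sq_abs] using
    Finset.sum_sq_le_sq_sum_of_nonneg (s := Finset.univ) fun j _ => abs_nonneg (x j)

lemma norm1_smul (c : ℝ) (x : EuclideanSpace ℝ (Fin n)) : norm1 (c • x) = |c| * norm1 x := by
  simp only [norm1, Finset.mul_sum, PiLp.smul_apply, smul_eq_mul, abs_mul]

lemma bddAbove_opNorm1 (H : EuclideanSpace ℝ (Fin n) →L[ℝ] EuclideanSpace ℝ (Fin m)) :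
    BddAbove ((fun x => norm1 (H x)) '' {x | norm1 x ≤ 1}) := by
  refine ⟨m * ‖H‖, ?_⟩
  rintro _ ⟨x, hx, rfl⟩
  calc norm1 (H x) ≤ m * ‖H x‖ := norm1_le_card_mul_norm _
  _ ≤ m * (‖H‖ * 1) := by
      gcongr
      exact H.le_opNorm_of_le ((norm_le_norm1 x).trans hx)
  _ = m * ‖H‖ := by rw [mul_one]

lemma opNorm1_nonneg (T : EuclideanSpace ℝ (Fin n) → EuclideanSpace ℝ (Fin m)) :
    0 ≤ opNorm1 T :=
  Real.sSup_nonneg <| by rintro _ ⟨x, -, rfl⟩; exact norm1_nonneg _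

lemma norm1_apply_le_opNorm1_mul
    (H : EuclideanSpace ℝ (Fin n) →L[ℝ] EuclideanSpace ℝ (Fin m))
    (x : EuclideanSpace ℝ (Fin n)) : norm1 (H x) ≤ opNorm1 H * norm1 x := by
  rcases eq_or_ne x 0 with rfl | hx
  · simp [norm1]
  have hpos : 0 < norm1 x := (norm_pos_iff.2 hx).trans_le (norm_le_norm1 x)
  have hunit : norm1 ((norm1 x)⁻¹ • x) ≤ 1 := by
    rw [norm1_smul, abs_of_pos (inv_pos.2 hpos), inv_mul_cancel₀ hpos.ne']
  have hle : norm1 (H ((norm1 x)⁻¹ • x)) ≤ opNorm1 H :=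
    le_csSup (bddAbove_opNorm1 H) ⟨_, hunit, rfl⟩
  rw [map_smul, norm1_smul, abs_of_pos (inv_pos.2 hpos), inv_mul_le_iff₀ hpos] at hle
  linarith

lemma sum_norm1_apply_sub_le (H : EuclideanSpace ℝ (Fin n) →L[ℝ] EuclideanSpace ℝ (Fin m))
    (s : Finset ℕ) (a b : ℕ → EuclideanSpace ℝ (Fin n)) :
    ∑ i ∈ s, norm1 (H (a i) - H (b i)) ≤ opNorm1 H * ∑ i ∈ s, norm1 (a i - b i) := by
  rw [Finset.mul_sum]
  exact Finset.sum_le_sum fun i _ => map_sub H (a i) (b i) ▸ norm1_apply_le_opNorm1_mul H _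

lemma normInf_le_iff {x : EuclideanSpace ℝ (Fin n)} {ε : ℝ} (hε : 0 ≤ ε) :
    normInf x ≤ ε ↔ ∀ j, |x j| ≤ ε :=
  ⟨fun hx j => (le_ciSup (Finite.bddAbove_range _) j).trans hx, fun hx => Real.iSup_le hx hε⟩

lemma norm1_sub_le_diam1 {S : Set (EuclideanSpace ℝ (Fin n))} {R : ℝ} (hS : ∀ x ∈ S, ‖x‖ ≤ R)
    {x y : EuclideanSpace ℝ (Fin n)} (hx : x ∈ S) (hy : y ∈ S) :
    norm1 (x - y) ≤ diam1 S := by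
  refine le_csSup ⟨n * (R + R), ?_⟩ ⟨(x, y), ⟨hx, hy⟩, rfl⟩
  rintro _ ⟨p, ⟨hp₁, hp₂⟩, rfl⟩
  calc norm1 (p.1 - p.2) ≤ n * ‖p.1 - p.2‖ := norm1_le_card_mul_norm _
  _ ≤ n * (R + R) := by
      gcongr
      exact (norm_sub_le _ _).trans (add_le_add (hS _ hp₁) (hS _ hp₂))

end L1

/-- The noise values `z` under which an observation `H Ψ u + z` is within `ε` of both `H Ψ u`
and `H Ψ u + w`. -/
def consistentNoise {m : ℕ} (ε : ℝ) (w : EuclideanSpace ℝ (Fin m)) :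
    Set (EuclideanSpace ℝ (Fin m)) :=
  {z | ∀ j, |z j| ≤ ε ∧ |w j - z j| ≤ ε}

section Noise

variable {m : ℕ} {ε : ℝ}

lemma consistentNoise_eq_preimage_pi (w : EuclideanSpace ℝ (Fin m)) :
    consistentNoise ε w = WithLp.ofLp ⁻¹'
      univ.pi fun j => Icc (-ε) ε ∩ Icc (w j - ε) (w j + ε) := by
  ext z
  simp only [consistentNoise, mem_ofPred_eq, mem_preimage, mem_univ_pi, mem_inter_iff, mem_Icc,
    abs_le]
  refine forall_congr' fun j => ?_
  constructor <;> rintro ⟨⟨_, _⟩, _, _⟩ <;> refine ⟨⟨?_, ?_⟩, ?_, ?_⟩ <;> linarith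

lemma measurableSet_consistentNoise (w : EuclideanSpace ℝ (Fin m)) :
    MeasurableSet (consistentNoise ε w) := by
  rw [consistentNoise_eq_preimage_pi]
  exact (PiLp.volume_preserving_ofLp (Fin m)).measurable
    (MeasurableSet.univ_pi fun _ => measurableSet_Icc.inter measurableSet_Icc)

lemma volume_Icc_inter_Icc_sub_add (ε a : ℝ) :
    volume (Icc (-ε) ε ∩ Icc (a - ε) (a + ε)) = ENNReal.ofReal (2 * ε - |a|) := by
  rw [Icc_inter_Icc, Real.volume_Icc]
  congr 1
  rcases le_total 0 a with ha | ha
  · rw [abs_of_nonneg ha, max_eq_right (by linarith), min_eq_left (by linarith)]; ring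
  · rw [abs_of_nonpos ha, max_eq_left (by linarith), min_eq_right (by linarith)]; ring

lemma volume_consistentNoise (w : EuclideanSpace ℝ (Fin m)) :
    volume (consistentNoise ε w) = ∏ j, ENNReal.ofReal (2 * ε - |w j|) := by
  rw [consistentNoise_eq_preimage_pi,
    (PiLp.volume_preserving_ofLp (Fin m)).measure_preimage
      (MeasurableSet.univ_pi fun _ => measurableSet_Icc.inter measurableSet_Icc).nullMeasurableSet,
    volume_pi_pi]
  simp only [volume_Icc_inter_Icc_sub_add]

variable {Ω : Type*} [MeasurableSpace Ω] {μ : Measure Ω}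

lemma measure_preimage_consistentNoise {Y : Ω → EuclideanSpace ℝ (Fin m)} (hY : Measurable Y)
    (hlaw : Measure.map Y μ = (ENNReal.ofReal ((2 * ε) ^ m))⁻¹ •
      volume.restrict {z : EuclideanSpace ℝ (Fin m) | ∀ j, |z j| ≤ ε})
    (hε : 0 < ε) (w : EuclideanSpace ℝ (Fin m)) :
    μ (Y ⁻¹' consistentNoise ε w) = ∏ j, ENNReal.ofReal (1 - |w j| / (2 * ε)) := by
  have hsub : consistentNoise ε w ⊆ {z | ∀ j, |z j| ≤ ε} := fun z hz j => (hz j).1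
  have h2ε : 0 < 2 * ε := by linarith
  rw [← Measure.map_apply hY (measurableSet_consistentNoise w), hlaw, Measure.smul_apply,
    smul_eq_mul, Measure.restrict_apply (measurableSet_consistentNoise w),
    inter_eq_self_of_subset_left hsub, volume_consistentNoise,
    ← ENNReal.ofReal_inv_of_pos (pow_pos h2ε m), ← inv_pow,
    ENNReal.ofReal_pow (inv_nonneg.2 h2ε.le), ← Fin.prod_const, ← Finset.prod_mul_distrib]
  refine Finset.prod_congr rfl fun j _ => ?_
  rw [← ENNReal.ofReal_mul (inv_nonneg.2 h2ε.le)]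
  congr 1
  field_simp

end Noise

lemma exp_neg_two_mul_le_one_sub {a : ℝ} (h0 : 0 ≤ a) (h1 : a ≤ 1 / 2) :
    Real.exp (-(2 * a)) ≤ 1 - a := by
  rw [Real.exp_neg, inv_le_iff_one_le_mul₀ (Real.exp_pos _)]
  nlinarith [Real.add_one_le_exp (2 * a)]

section Probability

variable {m : ℕ} {ε : ℝ} {Ω : Type*} [MeasurableSpace Ω] {μ : Measure Ω}

lemma exp_neg_le_measure_preimage_consistentNoise {Y : Ω → EuclideanSpace ℝ (Fin m)}
    (hY : Measurable Y)
    (hlaw : Measure.map Y μ = (ENNReal.ofReal ((2 * ε) ^ m))⁻¹ •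
      volume.restrict {z : EuclideanSpace ℝ (Fin m) | ∀ j, |z j| ≤ ε})
    (hε : 0 < ε) {w : EuclideanSpace ℝ (Fin m)} (hw : norm1 w ≤ ε) :
    ENNReal.ofReal (Real.exp (-(norm1 w / ε))) ≤ μ (Y ⁻¹' consistentNoise ε w) := by
  rw [measure_preimage_consistentNoise hY hlaw hε, norm1, Finset.sum_div,
    ← Finset.sum_neg_distrib, Real.exp_sum,
    ENNReal.ofReal_prod_of_nonneg fun _ _ => (Real.exp_pos _).le]
  refine Finset.prod_le_prod' fun j _ => ENNReal.ofReal_le_ofReal ?_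
  have hwj : |w j| ≤ ε := (abs_apply_le_norm1 w j).trans hw
  calc Real.exp (-(|w j| / ε)) = Real.exp (-(2 * (|w j| / (2 * ε)))) := by field_simp
  _ ≤ 1 - |w j| / (2 * ε) := exp_neg_two_mul_le_one_sub (by positivity) <| by
      rw [div_le_iff₀ (by linarith)]; linarith

lemma exp_neg_one_le_measure_iInter_preimage_consistentNoise {ι : Type*}
    {Z : ι → Ω → EuclideanSpace ℝ (Fin m)} (hZmeas : ∀ i, Measurable (Z i))
    (hZindep : iIndepFun Z μ)
    (hZlaw : ∀ i, Measure.map (Z i) μ = (ENNReal.ofReal ((2 * ε) ^ m))⁻¹ •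
      volume.restrict {z : EuclideanSpace ℝ (Fin m) | ∀ j, |z j| ≤ ε})
    (hε : 0 < ε) {s : Finset ι} {w : ι → EuclideanSpace ℝ (Fin m)}
    (hw : ∑ i ∈ s, norm1 (w i) ≤ ε) :
    ENNReal.ofReal (Real.exp (-1)) ≤ μ (⋂ i ∈ s, Z i ⁻¹' consistentNoise ε (w i)) := by
  have hwi : ∀ i ∈ s, norm1 (w i) ≤ ε := fun i hi =>
    (Finset.single_le_sum (fun j _ => norm1_nonneg (w j)) hi).trans hw
  rw [hZindep.measure_inter_preimage_eq_mul s fun i _ => measurableSet_consistentNoise (w i)]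
  calc ENNReal.ofReal (Real.exp (-1))
      ≤ ENNReal.ofReal (Real.exp (∑ i ∈ s, -(norm1 (w i) / ε))) := by
        gcongr
        rw [Finset.sum_neg_distrib, ← Finset.sum_div, neg_le_neg_iff, div_le_one hε]
        exact hw
  _ = ∏ i ∈ s, ENNReal.ofReal (Real.exp (-(norm1 (w i) / ε))) := by
        rw [Real.exp_sum, ENNReal.ofReal_prod_of_nonneg fun _ _ => (Real.exp_pos _).le]
  _ ≤ ∏ i ∈ s, μ (Z i ⁻¹' consistentNoise ε (w i)) := Finset.prod_le_prod' fun i hi =>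
        exp_neg_le_measure_preimage_consistentNoise (hZmeas i) (hZlaw i) hε (hwi i hi)

end Probability

lemma mul_measure_le_lintegral_of_le {α : Type*} [MeasurableSpace α] {μ : Measure α}
    {s : Set α} (hs : MeasurableSet s) {c : ℝ≥0∞} {f : α → ℝ≥0∞} (hf : ∀ x ∈ s, c ≤ f x) :
    c * μ s ≤ ∫⁻ x, f x ∂μ :=
  calc c * μ s = ∫⁻ _ in s, c ∂μ := (setLIntegral_const _ _).symm
  _ ≤ ∫⁻ x in s, f x ∂μ := setLIntegral_mono' hs hf
  _ ≤ ∫⁻ x, f x ∂μ := setLIntegral_le_lintegral _ _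

lemma norm1_sub_le_diam1_smootherSupp {d dO : ℕ} {Ω : Type*}
    {Ψ : ℝ → EuclideanSpace ℝ (Fin d) → EuclideanSpace ℝ (Fin d)}
    {H : EuclideanSpace ℝ (Fin d) →L[ℝ] EuclideanSpace ℝ (Fin dO)}
    {q : EuclideanSpace ℝ (Fin d) → ℝ} {R h ε : ℝ} {u v : EuclideanSpace ℝ (Fin d)}
    {Z : ℕ → Ω → EuclideanSpace ℝ (Fin dO)} {k : ℕ} {ω : Ω} (hε : 0 ≤ ε)
    (hu : ‖u‖ ≤ R) (hqu : 0 < q u) (hv : ‖v‖ ≤ R) (hqv : 0 < q v)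
    (hZ : ∀ i ≤ k, Z i ω ∈ consistentNoise ε (H (Ψ (i * h) v) - H (Ψ (i * h) u))) :
    norm1 (v - u) ≤ diam1 (smootherSupp Ψ H q R h ε u Z k ω) := by
  refine norm1_sub_le_diam1 (fun x hx => hx.1)
    ⟨hv, hqv, fun i hi => ?_⟩ ⟨hu, hqu, fun i hi => ?_⟩
  all_goals
    refine (normInf_le_iff hε).2 fun j => ?_
    obtain ⟨hZu, hZv⟩ := hZ i hi j
    simp only [PiLp.sub_apply, PiLp.add_apply, abs_le] at hZu hZv ⊢
    constructor <;> linarith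

theorem expected_diam_smoother_lower_bound_general {d dO : ℕ}
    (R : ℝ)
    (Ψ : ℝ → EuclideanSpace ℝ (Fin d) → EuclideanSpace ℝ (Fin d))
    (h : ℝ)
    (H : EuclideanSpace ℝ (Fin d) →L[ℝ] EuclideanSpace ℝ (Fin dO))
    (ε : ℝ) (hε : 0 < ε)
    (Ω : Type*) [MeasurableSpace Ω] (μ : Measure Ω)
    (Z : ℕ → Ω → EuclideanSpace ℝ (Fin dO))
    (hZmeas : ∀ i, Measurable (Z i))
    (hZindep : iIndepFun Z μ)
    (hZlaw : ∀ i, Measure.map (Z i) μ =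
      (ENNReal.ofReal ((2 * ε) ^ dO))⁻¹ •
        volume.restrict {z : EuclideanSpace ℝ (Fin dO) | ∀ j, |z j| ≤ ε})
    (q : EuclideanSpace ℝ (Fin d) → ℝ)
    (u : EuclideanSpace ℝ (Fin d)) (hu : ‖u‖ ≤ R) (hqu : 0 < q u)
    -- Assumption 2 (leaf set):
    (U : Set (EuclideanSpace ℝ (Fin d)))
    (hUsub : U ⊆ {x : EuclideanSpace ℝ (Fin d) | ‖x‖ ≤ R})
    (dmax : ℝ)
    (hUrange : (fun v => norm1 (v - u)) '' U = Icc 0 dmax)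
    (CU : ℝ)
    (hCU : ∀ v ∈ U, ∀ k : ℕ,
      ∑ i ∈ Finset.range (k + 1), norm1 (Ψ (i * h) v - Ψ (i * h) u) ≤ CU * norm1 (v - u))
    (hqU : ∀ v ∈ U, 0 < q v)
    (hεub : ε ≤ dmax * CU * opNorm1 (fun x : EuclideanSpace ℝ (Fin d) => H x)) :
    ∀ k : ℕ,
      ENNReal.ofReal ((1 / Real.exp 1) *
          ε / (CU * opNorm1 (fun x : EuclideanSpace ℝ (Fin d) => H x))) ≤
        ∫⁻ ω, ENNReal.ofReal (diam1 (smootherSupp Ψ H q R h ε u Z k ω)) ∂μ := by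
  intro k
  set N := opNorm1 (fun x : EuclideanSpace ℝ (Fin d) => H x)
  set c := ε / (CU * N)
  have hbound : (1 / Real.exp 1) * ε / (CU * N) = c * Real.exp (-1) := by
    rw [Real.exp_neg]; ring
  rcases le_or_gt c 0 with hc | hc
  · rw [hbound, ENNReal.ofReal_of_nonpos (mul_nonpos_of_nonpos_of_nonneg hc (Real.exp_pos _).le)]
    exact zero_le
  have hCN : 0 < CU * N := (div_pos_iff_of_pos_left hε).1 hc
  obtain ⟨v, hvU, hvc : norm1 (v - u) = c⟩ : c ∈ (fun v => norm1 (v - u)) '' U :=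
    hUrange ▸ ⟨hc.le, (div_le_iff₀ hCN).2 (by linarith)⟩
  set w : ℕ → EuclideanSpace ℝ (Fin dO) := fun i => H (Ψ (i * h) v) - H (Ψ (i * h) u)
  have hw : ∑ i ∈ Finset.range (k + 1), norm1 (w i) ≤ ε := calc
    _ ≤ N * (CU * norm1 (v - u)) := (sum_norm1_apply_sub_le H _ _ _).trans <|
        mul_le_mul_of_nonneg_left (hCU v hvU k) (opNorm1_nonneg _)
    _ = ε := by rw [hvc, ← mul_assoc, mul_comm N CU, mul_div_cancel₀ _ hCN.ne']
  set E := ⋂ i ∈ Finset.range (k + 1), Z i ⁻¹' consistentNoise ε (w i)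
  have hE : MeasurableSet E := Finset.measurableSet_biInter _ fun i _ =>
    hZmeas i (measurableSet_consistentNoise (w i))
  have hdiam : ∀ ω ∈ E,
      ENNReal.ofReal c ≤ ENNReal.ofReal (diam1 (smootherSupp Ψ H q R h ε u Z k ω)) :=
    fun ω hω => ENNReal.ofReal_le_ofReal <| hvc ▸ norm1_sub_le_diam1_smootherSupp hε.le hu hqu
      (hUsub hvU) (hqU v hvU) fun i hi => mem_iInter₂.1 hω i (Finset.mem_range_succ_iff.2 hi)
  calc ENNReal.ofReal ((1 / Real.exp 1) * ε / (CU * N))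
      = ENNReal.ofReal c * ENNReal.ofReal (Real.exp (-1)) := by
        rw [hbound, ENNReal.ofReal_mul hc.le]
  _ ≤ ENNReal.ofReal c * μ E := by
        gcongr
        exact exp_neg_one_le_measure_iInter_preimage_consistentNoise hZmeas hZindep hZlaw hε hw
  _ ≤ _ := mul_measure_le_lintegral_of_le hE hdiam

/-- lower bound on the expected ℓ¹-diameter of the support of the
smoother under the leaf-set assumption, for uniform observation noise. -/
theorem expected_diam_smoother_lower_bound {d dO : ℕ}
    (A : EuclideanSpace ℝ (Fin d) →L[ℝ] EuclideanSpace ℝ (Fin d))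
    (B : EuclideanSpace ℝ (Fin d) →L[ℝ] EuclideanSpace ℝ (Fin d) →L[ℝ] EuclideanSpace ℝ (Fin d))
    (f : EuclideanSpace ℝ (Fin d))
    (R δ : ℝ) (hR : 0 < R) (hδ : 0 < δ)
    (htrap : ∀ x : EuclideanSpace ℝ (Fin d),
      ‖x‖ ∈ Icc R (R + δ) → (inner ℝ (f - A x - B x x) x : ℝ) ≤ 0)
    (Ψ : ℝ → EuclideanSpace ℝ (Fin d) → EuclideanSpace ℝ (Fin d))
    (hΨ0 : ∀ x, ‖x‖ ≤ R → Ψ 0 x = x)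
    (hΨR : ∀ x, ‖x‖ ≤ R → ∀ t : ℝ, 0 ≤ t → ‖Ψ t x‖ ≤ R)
    (hΨode : ∀ x, ‖x‖ ≤ R → ∀ t : ℝ, 0 ≤ t →
      HasDerivWithinAt (fun s => Ψ s x)
        (f - A (Ψ t x) - B (Ψ t x) (Ψ t x)) (Ici 0) t)
    (h : ℝ) (hh : 0 < h)
    (H : EuclideanSpace ℝ (Fin d) →L[ℝ] EuclideanSpace ℝ (Fin dO))
    (hH : 0 < opNorm1 (fun x : EuclideanSpace ℝ (Fin d) => H x))
    (ε : ℝ) (hε : 0 < ε)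
    (Ω : Type*) [MeasurableSpace Ω] (μ : Measure Ω) [IsProbabilityMeasure μ]
    (Z : ℕ → Ω → EuclideanSpace ℝ (Fin dO))
    (hZmeas : ∀ i, Measurable (Z i))
    (hZindep : iIndepFun Z μ)
    (hZlaw : ∀ i, Measure.map (Z i) μ =
      (ENNReal.ofReal ((2 * ε) ^ dO))⁻¹ •
        volume.restrict {z : EuclideanSpace ℝ (Fin dO) | ∀ j, |z j| ≤ ε})
    (q : EuclideanSpace ℝ (Fin d) → ℝ) (hq : ∀ x, 0 ≤ q x)
    (hqsupp : ∀ x : EuclideanSpace ℝ (Fin d), ¬ ‖x‖ ≤ R → q x = 0)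
    (u : EuclideanSpace ℝ (Fin d)) (hu : ‖u‖ ≤ R) (hqu : 0 < q u)
    -- Assumption 2 (leaf set):
    (U : Set (EuclideanSpace ℝ (Fin d)))
    (hUsub : U ⊆ {x : EuclideanSpace ℝ (Fin d) | ‖x‖ ≤ R})
    (dmax : ℝ) (hdmax : 0 < dmax)
    (hUrange : (fun v => norm1 (v - u)) '' U = Icc 0 dmax)
    (CU : ℝ)
    (hCU : ∀ v ∈ U, ∀ k : ℕ,
      ∑ i ∈ Finset.range (k + 1), norm1 (Ψ (i * h) v - Ψ (i * h) u) ≤ CU * norm1 (v - u))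
    (hqU : ∀ v ∈ U, 0 < q v)
    (hεub : ε ≤ dmax * CU * opNorm1 (fun x : EuclideanSpace ℝ (Fin d) => H x)) :
    ∀ k : ℕ,
      ENNReal.ofReal ((1 / Real.exp 1) *
          ε / (CU * opNorm1 (fun x : EuclideanSpace ℝ (Fin d) => H x))) ≤
        ∫⁻ ω, ENNReal.ofReal (diam1 (smootherSupp Ψ H q R h ε u Z k ω)) ∂μ :=
  expected_diam_smoother_lower_bound_general R Ψ h H ε hε Ω μ Z hZmeas hZindep hZlaw q u hu hqu U
    hUsub dmax hUrange CU hCU hqU hεub
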